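/- arXiv:2407.09905 — 2 statements merged into one kernel-verified Lean document; each statement's English description precedes it below -/
import Mathlib

section
/- (First-iterate guarantee, submodular case) Let F be monotone submodular with F(∅)=0 and curvature k_F. Let τ₀ be any feasible trajectory, m the tight modular lower bound of F at τ₀ built from a permutation placing τ₀ first, and let τ₁ be a maximizer of m over a feasible family C containing τ₀. Then F(τ₁) ≥ (1 - k_F) · max_{τ ∈ C} F(τ). -/
open Finset

def Submodular {V : Type*} [DecidableEq V] (F : Finset V → ℝ) : Prop :=
  ∀ A B : Finset V, ∀ v : V, A ⊆ B → v ∉ B →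
    F (insert v B) - F B ≤ F (insert v A) - F A

def MonotoneSetFun {V : Type*} [DecidableEq V] (F : Finset V → ℝ) : Prop :=
  ∀ A B : Finset V, A ⊆ B → F A ≤ F B

def prefixSet {V : Type*} [Fintype V] [DecidableEq V]
    (σ : Fin (Fintype.card V) ≃ V) (k : ℕ) : Finset V :=
  (Finset.univ.filter (fun i : Fin (Fintype.card V) => (i : ℕ) < k)).image σ

/-- The subgradient modular function of `F` at the set ordered first by `σ`. -/
def modularLB {V : Type*} [Fintype V] [DecidableEq V]
    (F : Finset V → ℝ) (σ : Fin (Fintype.card V) ≃ V) (Y : Finset V) : ℝ :=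
  ∑ v ∈ Y, (F (prefixSet σ ((σ.symm v : ℕ) + 1)) - F (prefixSet σ (σ.symm v : ℕ)))

lemma mem_prefixSet {V : Type*} [Fintype V] [DecidableEq V]
    (σ : Fin (Fintype.card V) ≃ V) (k : ℕ) (x : V) :
    x ∈ prefixSet σ k ↔ (σ.symm x : ℕ) < k := by
  simp only [prefixSet, mem_image, mem_filter, mem_univ, true_and]
  constructor
  · rintro ⟨i, hi, rfl⟩; simpa using hi
  · intro h; exact ⟨σ.symm x, h, σ.apply_symm_apply x⟩

lemma prefixSet_succ {V : Type*} [Fintype V] [DecidableEq V]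
    (σ : Fin (Fintype.card V) ≃ V) (i : Fin (Fintype.card V)) :
    prefixSet σ ((i : ℕ) + 1) = insert (σ i) (prefixSet σ (i : ℕ)) := by
  ext x
  simp only [mem_prefixSet, mem_insert, Nat.lt_succ_iff_lt_or_eq]
  constructor
  · rintro (h | h)
    · exact Or.inr (by simpa [mem_prefixSet] using h)
    · left
      have : σ.symm x = i := Fin.ext h
      rw [← this, σ.apply_symm_apply]
  · rintro (rfl | h)
    · right; simp
    · exact Or.inl (by simpa [mem_prefixSet] using h)

lemma modularLB_le_sub {V : Type*} [Fintype V] [DecidableEq V]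
    (F : Finset V → ℝ) (hsub : Submodular F) (σ : Fin (Fintype.card V) ≃ V)
    (Y : Finset V) : modularLB F σ Y ≤ F Y - F ∅ := by
  induction Y using Finset.strongInduction with
  | _ Y ih =>
    rcases Y.eq_empty_or_nonempty with rfl | hne
    · simp [modularLB]
    · obtain ⟨v, hv, hvmax⟩ := Y.exists_max_image (fun w => (σ.symm w : ℕ)) hne
      have hsubset : Y.erase v ⊆ prefixSet σ (σ.symm v : ℕ) := by
        intro w hw
        rw [mem_prefixSet]
        have hne' : w ≠ v := (Finset.mem_erase.mp hw).1
        have hle := hvmax w (Finset.mem_of_mem_erase hw)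
        have : σ.symm w ≠ σ.symm v := fun h => hne' (by
          have := congrArg σ h; simpa using this)
        omega
      have hvnot : v ∉ prefixSet σ (σ.symm v : ℕ) := by
        rw [mem_prefixSet]; omega
      have key : F (prefixSet σ ((σ.symm v : ℕ) + 1)) - F (prefixSet σ (σ.symm v : ℕ))
          ≤ F Y - F (Y.erase v) := by
        have h1 := hsub (Y.erase v) (prefixSet σ (σ.symm v : ℕ)) v hsubset hvnot
        rw [Finset.insert_erase hv] at h1
        rw [prefixSet_succ σ (σ.symm v), σ.apply_symm_apply]
        exact h1
      have hsum : modularLB F σ Y =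
          (F (prefixSet σ ((σ.symm v : ℕ) + 1)) - F (prefixSet σ (σ.symm v : ℕ)))
            + modularLB F σ (Y.erase v) := by
        rw [modularLB, ← Finset.add_sum_erase _ _ hv]; rfl
      have hih := ih (Y.erase v) (Finset.erase_ssubset hv)
      rw [hsum]; linarith

/-- First-iterate guarantee of GTO for monotone submodular rewards. -/
theorem first_iterate_submodular
    {V : Type*} [Fintype V] [DecidableEq V] [Nonempty V]
    (F : Finset V → ℝ) (hsub : Submodular F) (hmono : MonotoneSetFun F)
    (h0 : F ∅ = 0) (hposs : ∀ v : V, 0 < F {v})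
    (C : Finset (Finset V)) (τ₀ τ₁ : Finset V)
    (hτ₀ : τ₀ ∈ C) (hτ₁ : τ₁ ∈ C)
    (σ : Fin (Fintype.card V) ≃ V)
    (hσ : ∀ i : Fin (Fintype.card V), σ i ∈ τ₀ ↔ (i : ℕ) < τ₀.card)
    (hmax : ∀ τ ∈ C, modularLB F σ τ ≤ modularLB F σ τ₁) :
    ∀ τ ∈ C,
      (1 - (1 - Finset.univ.inf' Finset.univ_nonempty
            (fun w : V => (F univ - F (univ.erase w)) / F {w}))) * F τ ≤ F τ₁ := by
  intro τ hτ
  set c := Finset.univ.inf' Finset.univ_nonempty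
      (fun w : V => (F univ - F (univ.erase w)) / F {w}) with hc
  have hc_nonneg : 0 ≤ c := by
    apply Finset.le_inf'
    intro w _
    apply div_nonneg _ (hposs w).le
    have := hmono (univ.erase w) univ (Finset.erase_subset _ _)
    linarith
  -- c * F{v} ≤ marginal of v at any prefix
  have hmarg : ∀ v : V, c * F {v} ≤
      F (prefixSet σ ((σ.symm v : ℕ) + 1)) - F (prefixSet σ (σ.symm v : ℕ)) := by
    intro v
    have h1 : c ≤ (F univ - F (univ.erase v)) / F {v} :=
      Finset.inf'_le _ (Finset.mem_univ v)
    have h2 : c * F {v} ≤ F univ - F (univ.erase v) :=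
      (le_div_iff₀ (hposs v)).mp h1
    have hsubset : prefixSet σ (σ.symm v : ℕ) ⊆ univ.erase v := by
      intro x hx
      rw [mem_prefixSet] at hx
      refine Finset.mem_erase.mpr ⟨?_, Finset.mem_univ x⟩
      intro h; subst h; omega
    have hvnot : v ∉ univ.erase v := by simp
    have h3 := hsub (prefixSet σ (σ.symm v : ℕ)) (univ.erase v) v hsubset hvnot
    rw [Finset.insert_erase (Finset.mem_univ v)] at h3
    rw [prefixSet_succ σ (σ.symm v), σ.apply_symm_apply]
    linarith
  -- F τ ≤ ∑ singletons
  have hsubadd : ∀ Y : Finset V, F Y ≤ ∑ v ∈ Y, F {v} := by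
    intro Y
    induction Y using Finset.induction with
    | empty => simp [h0]
    | @insert a s ha ih =>
      have := hsub ∅ s a (Finset.empty_subset s) ha
      simp only [Finset.insert_empty, h0, sub_zero] at this
      rw [Finset.sum_insert ha]
      linarith
  have step1 : c * F τ ≤ modularLB F σ τ := by
    calc c * F τ ≤ c * ∑ v ∈ τ, F {v} :=
          mul_le_mul_of_nonneg_left (hsubadd τ) hc_nonneg
      _ = ∑ v ∈ τ, c * F {v} := Finset.mul_sum _ _ _
      _ ≤ modularLB F σ τ := Finset.sum_le_sum (fun v _ => hmarg v)
  have step2 := hmax τ hτ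
  have step3 := modularLB_le_sub F hsub σ τ₁
  rw [h0] at step3
  have : (1 - (1 - c)) * F τ = c * F τ := by ring
  rw [this]
  linarith
end

section
/- (First-iterate guarantee, supermodular case) Let F be monotone supermodular with F(∅)=0 and supermodular curvature k^F < 1. Let τ₀ ∈ C, m the tight modular lower bound of F at τ₀ (m_τ₀(Y) = F(τ₀) - Σ_{j∈τ₀\Y} F(j|τ₀\{j}) + Σ_{j∈Y\τ₀} F({j})), and τ₁ ∈ C a maximizer of m over C. Then F(τ₁) ≥ ((k^F)² - 3k^F + 1)/(1 - k^F) · max_{τ ∈ C} F(τ). -/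
open Finset

def Supermodular {V : Type*} [DecidableEq V] (F : Finset V → ℝ) : Prop :=
  ∀ A B : Finset V, ∀ v : V, A ⊆ B → v ∉ B →
    F (insert v A) - F A ≤ F (insert v B) - F B

/-- The tight modular lower bound of a supermodular `F` at `X`. -/
def supermodularLB {V : Type*} [Fintype V] [DecidableEq V]
    (F : Finset V → ℝ) (X Y : Finset V) : ℝ :=
  F X - ∑ j ∈ X \ Y, (F (insert j (X.erase j)) - F (X.erase j)) + ∑ j ∈ Y \ X, F {j}

/-!
Write `ρ = 1 - k^F`, so that `ρ · F(v | V \ {v}) ≤ F({v})` for every `v`, and fix `τ ∈ C`.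
Supermodularity makes `m = supermodularLB F τ₀` a lower bound of `F` that is tight at `τ₀`,
so `F τ₁ ≥ m(τ₁) ≥ m(τ)` and `F τ₁ ≥ F τ₀`. With `A = ∑_{τ} F{j}`, `B = ∑_{τ₀ \ τ} F{j}` and
`M = ∑_{τ₀ \ τ} F(j | τ₀ \ {j})`, superadditivity gives `m(τ) ≥ A + B - M`, while
`ρ F τ ≤ A` (marginals are dominated by the top marginals), `ρ M ≤ B` and `B ≤ F τ₀ ≤ F τ₁`.
Hence `ρ² F τ ≤ ρ A ≤ ρ (F τ₁ - B) + B ≤ F τ₁`, and `ρ²` dominates the stated factor: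
`(1 - k)² - (k² - 3k + 1) / (1 - k) = k² (2 - k) / (1 - k)`.
-/

namespace Supermodular

variable {V : Type*} [DecidableEq V] {F : Finset V → ℝ}

theorem add_sum_singleton_le_union (hF : Supermodular F) (h0 : F ∅ = 0) (D : Finset V) :
    ∀ S : Finset V, Disjoint D S → F S + ∑ j ∈ D, F {j} ≤ F (S ∪ D) := by
  induction D using Finset.induction_on with
  | empty => simp
  | @insert j D hjD ih =>
    intro S hDS
    have hjS : j ∉ S := disjoint_left.mp hDS (mem_insert_self j D)
    have hgain : F {j} ≤ F (insert j (S ∪ D)) - F (S ∪ D) := by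
      simpa [h0] using hF ∅ (S ∪ D) j (empty_subset _) (by simp [hjS, hjD])
    have hS := ih S (disjoint_of_subset_left (subset_insert j D) hDS)
    rw [sum_insert hjD, union_insert]
    linarith

theorem sum_singleton_le (hF : Supermodular F) (h0 : F ∅ = 0) (S : Finset V) :
    ∑ j ∈ S, F {j} ≤ F S := by
  simpa [h0] using hF.add_sum_singleton_le_union h0 S ∅ (disjoint_empty_right S)

theorem sub_sum_marginal_le (hF : Supermodular F) (X T : Finset V) (hTX : T ⊆ X) :
    F X - ∑ j ∈ T, (F (insert j (X.erase j)) - F (X.erase j)) ≤ F (X \ T) := by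
  induction T using Finset.induction_on with
  | empty => simp
  | @insert j T hjT ih =>
    have hj : j ∈ X \ T := mem_sdiff.mpr ⟨hTX (mem_insert_self j T), hjT⟩
    have hgain := hF ((X \ T).erase j) (X.erase j) j
      (erase_subset_erase j sdiff_subset) (notMem_erase j X)
    rw [insert_erase hj] at hgain
    have hX : X \ insert j T = (X \ T).erase j := by ext; simp; tauto
    have hT := ih ((subset_insert j T).trans hTX)
    rw [sum_insert hjT, hX]
    linarith

section Fintype

variable [Fintype V]

theorem supermodularLB_le (hF : Supermodular F) (h0 : F ∅ = 0) (X Y : Finset V) :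
    supermodularLB F X Y ≤ F Y := by
  have hremove := hF.sub_sum_marginal_le X (X \ Y) sdiff_subset
  rw [sdiff_sdiff_self_left] at hremove
  have hadd := hF.add_sum_singleton_le_union h0 (Y \ X) (X ∩ Y)
    (disjoint_sdiff_self_left.mono_right inter_subset_left)
  have hY : X ∩ Y ∪ Y \ X = Y := by ext; simp; tauto
  rw [hY] at hadd
  unfold supermodularLB
  linarith

theorem sum_sub_le_supermodularLB (hF : Supermodular F) (h0 : F ∅ = 0) (X Y : Finset V) :
    ∑ j ∈ Y, F {j} + ∑ j ∈ X \ Y, F {j}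
        - ∑ j ∈ X \ Y, (F (insert j (X.erase j)) - F (X.erase j)) ≤ supermodularLB F X Y := by
  have hX := hF.sum_singleton_le h0 X
  rw [← sum_inter_add_sum_sdiff X Y] at hX
  rw [← sum_inter_add_sum_sdiff Y X, inter_comm]
  unfold supermodularLB
  linarith

theorem marginal_le_topMarginal (hF : Supermodular F) (X : Finset V) (j : V) :
    F (insert j (X.erase j)) - F (X.erase j) ≤ F univ - F (univ.erase j) := by
  have h := hF (X.erase j) (univ.erase j) j
    (erase_subset_erase j (subset_univ X)) (notMem_erase j univ)
  rwa [insert_erase (mem_univ j)] at h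

theorem singleton_le_topMarginal (hF : Supermodular F) (h0 : F ∅ = 0) (v : V) :
    F {v} ≤ F univ - F (univ.erase v) := by
  simpa [h0] using hF.marginal_le_topMarginal {v} v

theorem sub_empty_le_sum_topMarginal (hF : Supermodular F) (T : Finset V) :
    F T - F ∅ ≤ ∑ j ∈ T, (F univ - F (univ.erase j)) := by
  induction T using Finset.induction_on with
  | empty => simp
  | @insert j T hjT ih =>
    have hT : T ⊆ univ.erase j := fun x hx => mem_erase.mpr ⟨fun h => hjT (h ▸ hx), mem_univ x⟩
    have hgain := hF T (univ.erase j) j hT (notMem_erase j univ)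
    rw [insert_erase (mem_univ j)] at hgain
    rw [sum_insert hjT]
    linarith

theorem sq_mul_le_of_supermodularLB_le (hF : Supermodular F) (h0 : F ∅ = 0)
    (hsing : ∀ v, 0 ≤ F {v}) {ρ : ℝ} (hρ0 : 0 ≤ ρ) (hρ1 : ρ ≤ 1)
    (hρ : ∀ v, ρ * (F univ - F (univ.erase v)) ≤ F {v})
    {τ₀ τ τ₁ : Finset V} (hτ₀ : F τ₀ ≤ F τ₁) (hτ : supermodularLB F τ₀ τ ≤ F τ₁) :
    ρ ^ 2 * F τ ≤ F τ₁ := by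
  set A := ∑ j ∈ τ, F {j}
  set B := ∑ j ∈ τ₀ \ τ, F {j}
  set M := ∑ j ∈ τ₀ \ τ, (F (insert j (τ₀.erase j)) - F (τ₀.erase j))
  have hA : ρ * F τ ≤ A := by
    have htop := hF.sub_empty_le_sum_topMarginal τ
    rw [h0, sub_zero] at htop
    calc ρ * F τ ≤ ρ * ∑ j ∈ τ, (F univ - F (univ.erase j)) :=
          mul_le_mul_of_nonneg_left htop hρ0
      _ ≤ A := by rw [mul_sum]; exact sum_le_sum fun j _ => hρ j
  have hM : ρ * M ≤ B := by
    rw [mul_sum]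
    exact sum_le_sum fun j _ =>
      (mul_le_mul_of_nonneg_left (hF.marginal_le_topMarginal τ₀ j) hρ0).trans (hρ j)
  have hB : B ≤ F τ₁ :=
    calc B ≤ ∑ j ∈ τ₀, F {j} := sum_le_sum_of_subset_of_nonneg sdiff_subset fun j _ _ => hsing j
      _ ≤ F τ₀ := hF.sum_singleton_le h0 τ₀
      _ ≤ F τ₁ := hτ₀
  have hABM : A + B - M ≤ F τ₁ := (hF.sum_sub_le_supermodularLB h0 τ₀ τ).trans hτ
  calc ρ ^ 2 * F τ = ρ * (ρ * F τ) := by ring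
    _ ≤ ρ * A := mul_le_mul_of_nonneg_left hA hρ0
    _ ≤ ρ * (F τ₁ - B) + ρ * M := by nlinarith
    _ ≤ ρ * (F τ₁ - B) + B := by linarith
    _ ≤ F τ₁ := by nlinarith

end Fintype

end Supermodular

theorem curvature_factor_le_sq {k : ℝ} (hk : k < 1) :
    (k ^ 2 - 3 * k + 1) / (1 - k) ≤ (1 - k) ^ 2 := by
  rw [div_le_iff₀ (sub_pos.mpr hk)]
  nlinarith [mul_nonneg (sq_nonneg k) (by linarith : (0 : ℝ) ≤ 2 - k)]

theorem first_iterate_supermodular_general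
    {V : Type*} [Fintype V] [DecidableEq V] [Nonempty V]
    (F : Finset V → ℝ) (hsup : Supermodular F)
    (h0 : F ∅ = 0)
    (hpos : ∀ v : V, 0 < F univ - F (univ.erase v))
    (C : Finset (Finset V)) (τ₀ τ₁ : Finset V)
    (hτ₀ : τ₀ ∈ C)
    (hmax : ∀ τ ∈ C, supermodularLB F τ₀ τ ≤ supermodularLB F τ₀ τ₁)
    (kF : ℝ)
    (hkF : kF = 1 - Finset.univ.inf' Finset.univ_nonempty
            (fun v : V => F {v} / (F univ - F (univ.erase v))))
    (hk1 : kF < 1) :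
    ∀ τ ∈ C, ((kF ^ 2 - 3 * kF + 1) / (1 - kF)) * F τ ≤ F τ₁ := by
  intro τ hτ
  set ρ := univ.inf' univ_nonempty fun v : V => F {v} / (F univ - F (univ.erase v))
  have hρ_pos : 0 < ρ := by linarith
  have hρ : ∀ v, ρ * (F univ - F (univ.erase v)) ≤ F {v} := fun v =>
    (le_div_iff₀ (hpos v)).mp (inf'_le _ (mem_univ v))
  have hρ_le_one : ρ ≤ 1 := by
    obtain ⟨v⟩ := ‹Nonempty V›
    exact (inf'_le _ (mem_univ v)).trans
      ((div_le_one (hpos v)).mpr (hsup.singleton_le_topMarginal h0 v))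
  have hsing : ∀ v, 0 ≤ F {v} := fun v => (mul_nonneg hρ_pos.le (hpos v).le).trans (hρ v)
  have hτ₀τ₁ : F τ₀ ≤ F τ₁ := by
    simpa [supermodularLB] using (hmax τ₀ hτ₀).trans (hsup.supermodularLB_le h0 τ₀ τ₁)
  have hsq := hsup.sq_mul_le_of_supermodularLB_le h0 hsing hρ_pos.le hρ_le_one hρ hτ₀τ₁
    ((hmax τ hτ).trans (hsup.supermodularLB_le h0 τ₀ τ₁))
  have hFτ : 0 ≤ F τ := (sum_nonneg fun j _ => hsing j).trans (hsup.sum_singleton_le h0 τ)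
  have hfactor : (kF ^ 2 - 3 * kF + 1) / (1 - kF) ≤ ρ ^ 2 := by
    rw [show ρ = 1 - kF by rw [hkF, sub_sub_cancel]]
    exact curvature_factor_le_sq hk1
  exact (mul_le_mul_of_nonneg_right hfactor hFτ).trans hsq

/-- First-iterate guarantee of GTO for monotone supermodular rewards. -/
theorem first_iterate_supermodular
    {V : Type*} [Fintype V] [DecidableEq V] [Nonempty V]
    (F : Finset V → ℝ) (hsup : Supermodular F) (hmono : MonotoneSetFun F)
    (h0 : F ∅ = 0)
    (hpos : ∀ v : V, 0 < F univ - F (univ.erase v))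
    (C : Finset (Finset V)) (τ₀ τ₁ : Finset V)
    (hτ₀ : τ₀ ∈ C) (hτ₁ : τ₁ ∈ C)
    (hmax : ∀ τ ∈ C, supermodularLB F τ₀ τ ≤ supermodularLB F τ₀ τ₁)
    (kF : ℝ)
    (hkF : kF = 1 - Finset.univ.inf' Finset.univ_nonempty
            (fun v : V => F {v} / (F univ - F (univ.erase v))))
    (hk1 : kF < 1) :
    ∀ τ ∈ C, ((kF ^ 2 - 3 * kF + 1) / (1 - kF)) * F τ ≤ F τ₁ :=
  first_iterate_supermodular_general F hsup h0 hpos C τ₀ τ₁ hτ₀ hmax kF hkF hk1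
end
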